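/- Let ⊕ be an A-operation on ℝ⁺. For all u, v, w ∈ ℝ⁺, (u ⊕ w) ⊖̲ (u ⊕ v) ≤ w ⊖̲ v; and if ⊕ is strict, (u ⊕ w) ⊖̲ (u ⊕ v) = w ⊖̲ v (translation invariance of the lower subtraction). -/

import Mathlib

/-!
Rearranging `t ⊕ (u ⊕ v) = u ⊕ (t ⊕ v)`, every admissible `t` for `w ⊖̲ v` becomes, after
adding `u` on both sides, admissible for `(u ⊕ w) ⊖̲ (u ⊕ v)`, which gives the inequality.
When `⊕` is strict, `u ⊕ ·` reflects `≤`, so `u` can be cancelled again and the two sets of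
admissible `t` coincide.
-/

open Filter

section

variable {α : Type*} {op : α → α → α}

theorem op_left_comm (hassoc : ∀ x y z, op x (op y z) = op (op x y) z)
    (hcomm : ∀ x y, op x y = op y x) (x y z : α) : op x (op y z) = op y (op x z) := by
  rw [hassoc, hcomm x y, ← hassoc]

theorem op_le_op_left [Preorder α] (hcomm : ∀ x y, op x y = op y x)
    (hmono : ∀ x y z, x ≤ y → op x z ≤ op y z) (u : α) {w w' : α} (h : w ≤ w') :
    op u w ≤ op u w' := by
  rw [hcomm u w, hcomm u w']
  exact hmono w w' u h

theorem le_of_op_le_op_left [LinearOrder α] (hcomm : ∀ x y, op x y = op y x)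
    (hstrict : ∀ x y z, x < y → op x z < op y z) {u w w' : α} (h : op u w ≤ op u w') :
    w ≤ w' := by
  by_contra! hlt
  have := hstrict w' w u hlt
  rw [hcomm w' u, hcomm w u] at this
  exact this.not_ge h

end

theorem stmt_12_general
    (op : NNReal → NNReal → NNReal)
    (hassoc : ∀ u v w, op u (op v w) = op (op u v) w)
    (hcomm : ∀ u v, op u v = op v u)
    (hmono : ∀ u v w : NNReal, u ≤ v → op u w ≤ op v w)
    (u v w a b : NNReal)
    (ha : IsLeast {t : NNReal | op u w ≤ op t (op u v)} a)
    (hb : IsLeast {t : NNReal | w ≤ op t v} b) :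
    a ≤ b ∧ ((∀ x y z : NNReal, x < y → op x z < op y z) → a = b) := by
  have hab : a ≤ b := ha.2 <| by
    show op u w ≤ op b (op u v)
    rw [op_left_comm hassoc hcomm]
    exact op_le_op_left hcomm hmono u hb.1
  refine ⟨hab, fun hstrict => hab.antisymm (hb.2 ?_)⟩
  show w ≤ op a v
  have h : op u w ≤ op a (op u v) := ha.1
  rw [op_left_comm hassoc hcomm] at h
  exact le_of_op_le_op_left hcomm hstrict h

theorem stmt_12
    (op : NNReal → NNReal → NNReal)
    (hcont : Continuous fun p : NNReal × NNReal => op p.1 p.2)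
    (hassoc : ∀ u v w, op u (op v w) = op (op u v) w)
    (hcomm : ∀ u v, op u v = op v u)
    (hmono : ∀ u v w : NNReal, u ≤ v → op u w ≤ op v w)
    (hunb : ∀ v : NNReal, Tendsto (fun u => op u v) atTop atTop)
    (u v w a b : NNReal)
    (ha : IsLeast {t : NNReal | op u w ≤ op t (op u v)} a)
    (hb : IsLeast {t : NNReal | w ≤ op t v} b) :
    a ≤ b ∧ ((∀ x y z : NNReal, x < y → op x z < op y z) → a = b) :=
  stmt_12_general op hassoc hcomm hmono u v w a b ha hb
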